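/- Let ρ : ℝ × ℝ → ℝ be continuously differentiable. Then for all (θ,ψ), the inner product of the normal vector with the position vector satisfies N(θ,ψ) · X(θ,ψ) = ρ(θ,ψ)³ cos ψ. -/

import Mathlib

/-!
Write `X = ρ u` with `u(θ, ψ)` the unit vector of longitude `θ` and latitude `ψ`. Then
`X_θ = ρ_θ u + ρ u_θ` and `X_ψ = ρ_ψ u + ρ u_ψ`, and `N · X = X · (X_θ × X_ψ)` is a determinant
with the column `ρ u`, so the radial parts `ρ_θ u`, `ρ_ψ u` drop out and
`N · X = ρ³ · u · (u_θ × u_ψ) = ρ³ cos ψ`.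
-/

open Real

/-- The surface map `X(θ,ψ) = ρ(θ,ψ)·(cos ψ cos θ, cos ψ sin θ, sin ψ)`. -/
noncomputable def Xsurf (ρ : ℝ → ℝ → ℝ) (θ ψ : ℝ) : EuclideanSpace ℝ (Fin 3) :=
  WithLp.toLp 2 ![ρ θ ψ * Real.cos ψ * Real.cos θ, ρ θ ψ * Real.cos ψ * Real.sin θ, ρ θ ψ * Real.sin ψ]

/-- The normal vector `N = X_θ × X_ψ`. -/
noncomputable def Nsurf (ρ : ℝ → ℝ → ℝ) (θ ψ : ℝ) : EuclideanSpace ℝ (Fin 3) :=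
  WithLp.toLp 2 (crossProduct (deriv (fun t => Xsurf ρ t ψ) θ).ofLp (deriv (fun s => Xsurf ρ θ s) ψ).ofLp)

open Matrix
open scoped ENNReal

theorem smul_dotProduct_smul_add_cross_smul_add {R : Type*} [CommRing R] (a b r : R)
    (u v w : Fin 3 → R) :
    r • u ⬝ᵥ (a • u + r • v) ⨯₃ (b • u + r • w) = r ^ 3 * (u ⬝ᵥ v ⨯₃ w) := by
  simp only [map_add, map_smul, LinearMap.add_apply, LinearMap.smul_apply, cross_self,
    dotProduct_add, dotProduct_smul, smul_dotProduct, dot_self_cross, dot_cross_self,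
    dotProduct_zero, smul_zero, smul_eq_mul]
  ring

theorem HasDerivAt.toLp {ι : Type*} [Fintype ι] (p : ℝ≥0∞) [Fact (1 ≤ p)] {g : ℝ → ι → ℝ}
    {g' : ι → ℝ} {x : ℝ} (hg : HasDerivAt g g' x) :
    HasDerivAt (fun t => WithLp.toLp p (g t)) (WithLp.toLp p g') x :=
  (PiLp.hasFDerivAt_toLp p _).comp_hasDerivAt x hg

noncomputable def sphDir (θ ψ : ℝ) : Fin 3 → ℝ :=
  ![cos ψ * cos θ, cos ψ * sin θ, sin ψ]

theorem hasDerivAt_sphDir_left (θ ψ : ℝ) :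
    HasDerivAt (fun t => sphDir t ψ) ![-(cos ψ * sin θ), cos ψ * cos θ, 0] θ := by
  rw [hasDerivAt_pi]
  intro i
  fin_cases i
  · simpa [sphDir] using (hasDerivAt_cos θ).const_mul (cos ψ)
  · simpa [sphDir] using (hasDerivAt_sin θ).const_mul (cos ψ)
  · simpa [sphDir] using hasDerivAt_const θ (sin ψ)

theorem hasDerivAt_sphDir_right (θ ψ : ℝ) :
    HasDerivAt (fun s => sphDir θ s) ![-(sin ψ * cos θ), -(sin ψ * sin θ), cos ψ] ψ := by
  rw [hasDerivAt_pi]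
  intro i
  fin_cases i
  · simpa [sphDir] using (hasDerivAt_cos ψ).mul_const (cos θ)
  · simpa [sphDir] using (hasDerivAt_cos ψ).mul_const (sin θ)
  · simpa [sphDir] using hasDerivAt_sin ψ

theorem sphDir_dotProduct_cross_deriv (θ ψ : ℝ) :
    sphDir θ ψ ⬝ᵥ
      ![-(cos ψ * sin θ), cos ψ * cos θ, 0] ⨯₃ ![-(sin ψ * cos θ), -(sin ψ * sin θ), cos ψ] =
      cos ψ := by
  simp only [sphDir, cross_apply, dotProduct, Fin.sum_univ_three, cons_val_zero, cons_val_one,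
    cons_val]
  linear_combination (cos ψ ^ 3 + cos ψ * sin ψ ^ 2) * sin_sq_add_cos_sq θ +
    cos ψ * sin_sq_add_cos_sq ψ

theorem Xsurf_eq_smul_sphDir (ρ : ℝ → ℝ → ℝ) (θ ψ : ℝ) :
    Xsurf ρ θ ψ = WithLp.toLp 2 (ρ θ ψ • sphDir θ ψ) := by
  ext i
  fin_cases i <;> simp [Xsurf, sphDir, mul_assoc]

theorem hasDerivAt_Xsurf_left {ρ : ℝ → ℝ → ℝ} {θ ψ r : ℝ} (h : HasDerivAt (fun t => ρ t ψ) r θ) :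
    HasDerivAt (fun t => Xsurf ρ t ψ)
      (WithLp.toLp 2 (r • sphDir θ ψ + ρ θ ψ • ![-(cos ψ * sin θ), cos ψ * cos θ, 0])) θ := by
  simp only [Xsurf_eq_smul_sphDir, add_comm (r • _)]
  exact (h.smul (hasDerivAt_sphDir_left θ ψ)).toLp 2

theorem hasDerivAt_Xsurf_right {ρ : ℝ → ℝ → ℝ} {θ ψ r : ℝ} (h : HasDerivAt (fun s => ρ θ s) r ψ) :
    HasDerivAt (fun s => Xsurf ρ θ s)
      (WithLp.toLp 2 (r • sphDir θ ψ + ρ θ ψ • ![-(sin ψ * cos θ), -(sin ψ * sin θ), cos ψ])) ψ := by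
  simp only [Xsurf_eq_smul_sphDir, add_comm (r • _)]
  exact (h.smul (hasDerivAt_sphDir_right θ ψ)).toLp 2

theorem normal_dot_position (ρ : ℝ → ℝ → ℝ) (hρC : ContDiff ℝ 1 (Function.uncurry ρ)) :
    ∀ θ ψ : ℝ, (inner ℝ (Nsurf ρ θ ψ) (Xsurf ρ θ ψ) : ℝ) = (ρ θ ψ) ^ 3 * Real.cos ψ := by
  intro θ ψ
  have hρ : DifferentiableAt ℝ (Function.uncurry ρ) (θ, ψ) := hρC.differentiable one_ne_zero _
  have hρθ : DifferentiableAt ℝ (fun t => ρ t ψ) θ :=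
    hρ.comp (f := fun t => (t, ψ)) θ (differentiableAt_id.prodMk (differentiableAt_const ψ))
  have hρψ : DifferentiableAt ℝ (fun s => ρ θ s) ψ :=
    hρ.comp (f := fun s => (θ, s)) ψ ((differentiableAt_const θ).prodMk differentiableAt_id)
  rw [Nsurf, (hasDerivAt_Xsurf_left hρθ.hasDerivAt).deriv,
    (hasDerivAt_Xsurf_right hρψ.hasDerivAt).deriv, Xsurf_eq_smul_sphDir,
    EuclideanSpace.inner_toLp_toLp, star_trivial, WithLp.ofLp_toLp, WithLp.ofLp_toLp,
    smul_dotProduct_smul_add_cross_smul_add, sphDir_dotProduct_cross_deriv]
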